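/- Fix L > 0. If 0 ≤ a < b ≤ L, then ρ(s, b) < ρ(s, a) for every s ∈ (0, L]. -/

import Mathlib

/-- `β(s) = (√L − √s)/(√L + √s)`. -/
noncomputable def momBeta (L s : ℝ) : ℝ :=
  (Real.sqrt L - Real.sqrt s) / (Real.sqrt L + Real.sqrt s)

/-- The complex square root of a real number: `√x` if `x ≥ 0`, `i√(−x)` otherwise. -/
noncomputable def csqrt (x : ℝ) : ℂ :=
  if 0 ≤ x then ((Real.sqrt x : ℝ) : ℂ) else Complex.I * ((Real.sqrt (-x) : ℝ) : ℂ)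

/-- The discriminant `((1+β(s))²/4)(1 − ℓ/L)² − β(s)(1 − ℓ/L)`. -/
noncomputable def discr (L s ℓ : ℝ) : ℝ :=
  ((1 + momBeta L s) / 2) ^ 2 * (1 - ℓ / L) ^ 2 - momBeta L s * (1 - ℓ / L)

/-- The eigenvalue `((1+β(s))/2)(1 − ℓ/L) + sqrt(discriminant)` of `G(s, ℓ)`. -/
noncomputable def eigP (L s ℓ : ℝ) : ℂ :=
  (((1 + momBeta L s) / 2 * (1 - ℓ / L) : ℝ) : ℂ) + csqrt (discr L s ℓ)

/-- The eigenvalue `((1+β(s))/2)(1 − ℓ/L) − sqrt(discriminant)` of `G(s, ℓ)`. -/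
noncomputable def eigM (L s ℓ : ℝ) : ℂ :=
  (((1 + momBeta L s) / 2 * (1 - ℓ / L) : ℝ) : ℂ) - csqrt (discr L s ℓ)

/-- `ρ(s, ℓ)`: the maximum modulus of the two eigenvalues of `G(s, ℓ)`. -/
noncomputable def specRho (L s ℓ : ℝ) : ℝ :=
  max ‖eigP L s ℓ‖ ‖eigM L s ℓ‖

/-!
With `β = β(s) ≥ 0`, `c = (1 + β)/2 > 0` and `x = 1 - ℓ/L ∈ [0, 1]`, the eigenvalues are the roots of
`z² - 2cx z + βx`, so `ρ = max (cx + √(c²x² - βx)) (√(βx))` with the real square root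
truncated at `0`. The first term is strictly increasing in `x`: the discriminant `x(c²x - β)` is
increasing wherever it is nonnegative. The second is strictly increasing when `β > 0` and vanishes
when `β = 0`. Hence `ρ` is strictly increasing in `x`, i.e. strictly decreasing in `ℓ`.
-/


lemma momBeta_nonneg {L s : ℝ} (hsL : s ≤ L) : 0 ≤ momBeta L s :=
  div_nonneg (sub_nonneg.2 (Real.sqrt_le_sqrt hsL))
    (add_nonneg (Real.sqrt_nonneg L) (Real.sqrt_nonneg s))

/-- Since `Real.sqrt` vanishes on negatives, the right side covers both cases: real roots, where
`t + √d` dominates, and complex roots, which both have modulus `√(t ^ 2 - d)`. -/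
lemma max_norm_add_sub_csqrt {t d : ℝ} (ht : 0 ≤ t) :
    max ‖(t : ℂ) + csqrt d‖ ‖(t : ℂ) - csqrt d‖ = max (t + √d) (√(t ^ 2 - d)) := by
  rcases le_or_gt 0 d with hd | hd
  · have hsqrt : √(t ^ 2 - d) ≤ t + √d := by
      calc √(t ^ 2 - d) ≤ √(t ^ 2) := Real.sqrt_le_sqrt (by linarith)
        _ = t := Real.sqrt_sq ht
        _ ≤ t + √d := le_add_of_nonneg_right (Real.sqrt_nonneg d)
    have hsub : |t - √d| ≤ t + √d := abs_le.2 ⟨by linarith, by linarith [Real.sqrt_nonneg d]⟩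
    simp only [csqrt, if_pos hd, ← Complex.ofReal_add, ← Complex.ofReal_sub, Complex.norm_real,
      Real.norm_eq_abs, abs_of_nonneg (add_nonneg ht (Real.sqrt_nonneg d)),
      max_eq_left hsub, max_eq_left hsqrt]
  · have hI : ∀ u : ℝ, u ^ 2 = -d → ‖(t : ℂ) + u * Complex.I‖ = √(t ^ 2 - d) := by
      intro u hu
      rw [Complex.norm_add_mul_I, hu, sub_eq_add_neg]
    have hsq : √(-d) ^ 2 = -d := Real.sq_sqrt (by linarith)
    have hplus : ‖(t : ℂ) + csqrt d‖ = √(t ^ 2 - d) := by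
      rw [csqrt, if_neg hd.not_ge, mul_comm]; exact hI _ hsq
    have hminus : ‖(t : ℂ) - csqrt d‖ = √(t ^ 2 - d) := by
      have : (t : ℂ) - csqrt d = t + ((-√(-d) : ℝ) : ℂ) * Complex.I := by
        rw [csqrt, if_neg hd.not_ge]; push_cast; ring
      rw [this]
      exact hI _ (by rw [neg_sq, hsq])
    have ht' : t ≤ √(t ^ 2 - d) := Real.le_sqrt_of_sq_le (by linarith)
    rw [hplus, hminus, max_self, Real.sqrt_eq_zero_of_nonpos hd.le, add_zero, max_eq_right ht']

lemma specRho_eq_max {L s ℓ : ℝ} (h : 0 ≤ (1 + momBeta L s) / 2 * (1 - ℓ / L)) :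
    specRho L s ℓ = max ((1 + momBeta L s) / 2 * (1 - ℓ / L) + √(discr L s ℓ))
      (√(momBeta L s * (1 - ℓ / L))) := by
  rw [specRho, eigP, eigM, max_norm_add_sub_csqrt h, discr]
  ring_nf

/-- Where `c²x² - βx ≥ 0` with `x > 0` we have `c²x > β`, so the quadratic is increasing there. -/
lemma monotoneOn_sqrt_sq_mul_sq_sub_mul (c β : ℝ) :
    MonotoneOn (fun x => √(c ^ 2 * x ^ 2 - β * x)) (Set.Ici 0) := by
  intro x hx y hy hxy
  simp only [Set.mem_Ici] at hx hy
  rcases le_or_gt (c ^ 2 * x ^ 2 - β * x) 0 with hD | hD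
  · simp only [Real.sqrt_eq_zero_of_nonpos hD, Real.sqrt_nonneg]
  · have hx0 : 0 < x := hx.lt_of_ne (by rintro rfl; simp at hD)
    have hgap : 0 < c ^ 2 * x - β := by nlinarith
    apply Real.sqrt_le_sqrt
    nlinarith [mul_nonneg (sub_nonneg.2 hxy) (mul_nonneg (sq_nonneg c) hy)]

/-- The spectral radius of `z ^ 2 - 2 c x z + β x`, as a function of `x`. -/
lemma strictMonoOn_max_add_sqrt_discr {c β : ℝ} (hc : 0 < c) (hβ : 0 ≤ β) :
    StrictMonoOn (fun x => max (c * x + √(c ^ 2 * x ^ 2 - β * x)) (√(β * x))) (Set.Ici 0) := by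
  intro x hx y hy hxy
  simp only [Set.mem_Ici] at hx hy
  have hfirst : c * x + √(c ^ 2 * x ^ 2 - β * x) < c * y + √(c ^ 2 * y ^ 2 - β * y) :=
    add_lt_add_of_lt_of_le (mul_lt_mul_of_pos_left hxy hc)
      (monotoneOn_sqrt_sq_mul_sq_sub_mul c β hx hy hxy.le)
  refine max_lt (hfirst.trans_le (le_max_left _ _)) ?_
  rcases hβ.eq_or_lt with rfl | hβ
  · calc √(0 * x) = 0 := by simp
      _ ≤ c * x + √(c ^ 2 * x ^ 2 - 0 * x) := by positivity
      _ < _ := hfirst.trans_le (le_max_left _ _)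
  · exact (Real.sqrt_lt_sqrt (by positivity) (mul_lt_mul_of_pos_left hxy hβ)).trans_le
      (le_max_right _ _)

theorem stmt11_general {L a b : ℝ} (hL : 0 < L) (hab : a < b) (hbL : b ≤ L) :
    ∀ s : ℝ, 0 < s → s ≤ L → specRho L s b < specRho L s a := by
  intro s _ hsL
  have hβ := momBeta_nonneg hsL
  have hc : 0 < (1 + momBeta L s) / 2 := by linarith
  have hxb : 0 ≤ 1 - b / L := sub_nonneg.2 ((div_le_one hL).2 hbL)
  have hxab : 1 - b / L < 1 - a / L := sub_lt_sub_left (div_lt_div_of_pos_right hab hL) 1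
  rw [specRho_eq_max (mul_nonneg hc.le hxb),
    specRho_eq_max (mul_nonneg hc.le (hxb.trans hxab.le))]
  exact strictMonoOn_max_add_sqrt_discr hc hβ hxb (hxb.trans hxab.le) hxab

/-- (Lemma `la:lem:top-rho`.) `ρ(s, ·)` is strictly
decreasing: if `0 ≤ a < b ≤ L`, then `ρ(s, b) < ρ(s, a)` for all `s ∈ (0, L]`. -/
theorem stmt11 {L a b : ℝ} (hL : 0 < L) (ha : 0 ≤ a) (hab : a < b) (hbL : b ≤ L) :
    ∀ s : ℝ, 0 < s → s ≤ L → specRho L s b < specRho L s a :=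
  stmt11_general hL hab hbL
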